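/- If f ∈ 𝒮_{1/2}(P), then f^{-1} f̄ is a P-kernel whose associated left Kazhdan-Lusztig-Stanley function is f itself. -/
import Mathlib


open Polynomial

namespace KLS

noncomputable section

variable {P : Type*} [PartialOrder P] [LocallyFiniteOrder P] [DecidableEq P]

/-- Convolution product in the incidence algebra `I(P)`. -/
def conv (f g : P → P → Polynomial ℤ) : P → P → Polynomial ℤ :=
  fun x z => ∑ y ∈ Finset.Icc x z, f x y * g y z

/-- The identity element `δ` of the incidence algebra. -/
def delta : P → P → Polynomial ℤ := fun x y => if x = y then 1 else 0

/-- Pointwise sum in the incidence algebra. -/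
def add (f g : P → P → Polynomial ℤ) : P → P → Polynomial ℤ :=
  fun x y => f x y + g x y

/-- The bar involution `f̄_{xy}(t) = t^{r_{xy}} f_{xy}(t⁻¹)`. -/
def bar (r : P → P → ℕ) (f : P → P → Polynomial ℤ) : P → P → Polynomial ℤ :=
  fun x y => (f x y).reflect (r x y)

/-- The hat involution `ĥ_{xy}(t) = (-1)^{r_{xy}} h_{xy}(t)`. -/
def hat (r : P → P → ℕ) (f : P → P → Polynomial ℤ) : P → P → Polynomial ℤ :=
  fun x y => (-1 : Polynomial ℤ) ^ (r x y) * f x y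

/-- `r` is a weak rank function: positive on strict pairs and additive. -/
def IsWeakRank (r : P → P → ℕ) : Prop :=
  (∀ x y : P, x < y → 0 < r x y) ∧
    ∀ x y z : P, x ≤ y → y ≤ z → r x y + r y z = r x z

/-- Membership in the subring `𝒮(P)`: `deg f_{xy} ≤ r_{xy}`. -/
def InS (r : P → P → ℕ) (f : P → P → Polynomial ℤ) : Prop :=
  ∀ x y : P, x ≤ y → (f x y).natDegree ≤ r x y

/-- Membership in `𝒮_{1/2}(P)`: `f_{xx} = 1` and `deg f_{xy} < r_{xy}/2`. -/
def InHalf (r : P → P → ℕ) (f : P → P → Polynomial ℤ) : Prop :=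
  (∀ x : P, f x x = 1) ∧ ∀ x y : P, x < y → 2 * (f x y).natDegree < r x y

/-- An incidence function vanishes off the order relation. -/
def Supported (f : P → P → Polynomial ℤ) : Prop :=
  ∀ x y : P, ¬ x ≤ y → f x y = 0

/-- `κ` is a `P`-kernel: `κ ∈ 𝒮(P)`, `κ_{xx} = 1` and `κ⁻¹ = κ̄`. -/
def IsKernel (r : P → P → ℕ) (κ : P → P → Polynomial ℤ) : Prop :=
  InS r κ ∧ (∀ x : P, κ x x = 1) ∧
    (∀ x z : P, x ≤ z → conv κ (bar r κ) x z = delta x z) ∧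
    (∀ x z : P, x ≤ z → conv (bar r κ) κ x z = delta x z)

set_option linter.unusedSectionVars false
attribute [local instance] Classical.propDecidable

-- my lemmas
lemma reflect_sum {α : Type*} (s : Finset α) (N : ℕ) (p : α → Polynomial ℤ) :
    (∑ i ∈ s, p i).reflect N = ∑ i ∈ s, (p i).reflect N := by
  ext j
  simp [Polynomial.coeff_reflect, Polynomial.finset_sum_coeff]

lemma natDegree_reflect_le {N : ℕ} {p : Polynomial ℤ} (h : p.natDegree ≤ N) :
    (p.reflect N).natDegree ≤ N := by
  refine Polynomial.natDegree_le_iff_coeff_eq_zero.mpr fun i hi => ?_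
  rw [Polynomial.coeff_reflect, Polynomial.revAt_eq_self_of_lt hi]
  exact Polynomial.coeff_eq_zero_of_natDegree_lt (h.trans_lt hi)

lemma reflect_reflect (N : ℕ) (p : Polynomial ℤ) : (p.reflect N).reflect N = p := by
  ext i
  simp [Polynomial.coeff_reflect]

lemma rank_self (r : P → P → ℕ) (hr : IsWeakRank r) (x : P) : r x x = 0 := by
  have := hr.2 x x x le_rfl le_rfl; omega

lemma conv_assoc (f g h : P → P → Polynomial ℤ) :
    conv (conv f g) h = conv f (conv g h) := by
  funext x z
  unfold conv
  simp_rw [Finset.sum_mul, Finset.mul_sum]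
  rw [Finset.sum_comm' (s' := fun y => Finset.Icc y z) (t' := Finset.Icc x z)
    (fun w y => by
      simp only [Finset.mem_Icc]
      constructor
      · rintro ⟨⟨h1, h2⟩, h3, h4⟩; exact ⟨⟨h4, h2⟩, h3, h4.trans h2⟩
      · rintro ⟨⟨h1, h2⟩, h3, h4⟩; exact ⟨⟨h3.trans h1, h2⟩, h3, h1⟩)]
  refine Finset.sum_congr rfl fun y hy => Finset.sum_congr rfl fun w hw => ?_
  ring

set_option linter.unusedSectionVars false
attribute [local instance] Classical.propDecidable

lemma bar_conv (r : P → P → ℕ) (hr : IsWeakRank r)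
    (f g : P → P → Polynomial ℤ) (hf : InS r f) (hg : InS r g) :
    bar r (conv f g) = conv (bar r f) (bar r g) := by
  funext x z
  by_cases hxz : x ≤ z
  · unfold bar conv
    rw [reflect_sum]
    refine Finset.sum_congr rfl fun y hy => ?_
    rw [Finset.mem_Icc] at hy
    rw [← hr.2 x y z hy.1 hy.2, Polynomial.reflect_mul _ _ (hf x y hy.1) (hg y z hy.2)]
  · unfold bar conv
    rw [Finset.Icc_eq_empty hxz]
    simp

lemma bar_delta (r : P → P → ℕ) (hr : IsWeakRank r) :
    bar r (delta : P → P → Polynomial ℤ) = delta := by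
  funext x y
  unfold bar delta
  by_cases h : x = y
  · subst h
    simp [rank_self r hr x, Polynomial.reflect_one]
  · simp [h]

lemma bar_bar (r : P → P → ℕ) (f : P → P → Polynomial ℤ) : bar r (bar r f) = f := by
  funext x y
  exact reflect_reflect _ _

lemma supported_bar (r : P → P → ℕ) (f : P → P → Polynomial ℤ) (hf : Supported f) :
    Supported (bar r f) := fun x y h => by
  unfold bar; rw [hf x y h, Polynomial.reflect_zero]

lemma supported_conv (f g : P → P → Polynomial ℤ) : Supported (conv f g) := by
  intro x y h
  unfold conv
  rw [Finset.Icc_eq_empty h, Finset.sum_empty]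

lemma InS_bar (r : P → P → ℕ) (f : P → P → Polynomial ℤ) (hf : InS r f) :
    InS r (bar r f) := fun x y _ => natDegree_reflect_le (hf x y ‹_›)

lemma delta_conv (h : P → P → Polynomial ℤ) (hs : Supported h) : conv delta h = h := by
  funext x z
  unfold conv delta
  by_cases hxz : x ≤ z
  · simp_rw [ite_mul, one_mul, zero_mul]
    rw [Finset.sum_ite_eq, if_pos (Finset.mem_Icc.mpr ⟨le_rfl, hxz⟩)]
  · rw [Finset.Icc_eq_empty hxz, Finset.sum_empty, hs x z hxz]

lemma conv_delta (h : P → P → Polynomial ℤ) (hs : Supported h) : conv h delta = h := by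
  funext x z
  unfold conv delta
  by_cases hxz : x ≤ z
  · have : ∀ y ∈ Finset.Icc x z, h x y * (if y = z then 1 else 0)
        = if y = z then h x y else 0 := by
      intro y _; split <;> simp
    rw [Finset.sum_congr rfl this, Finset.sum_ite_eq', if_pos (Finset.mem_Icc.mpr ⟨hxz, le_rfl⟩)]
  · rw [Finset.Icc_eq_empty hxz, Finset.sum_empty, hs x z hxz]

/-- right inverse of a unitriangular incidence function -/
def rinv (f : P → P → Polynomial ℤ) (x z : P) : Polynomial ℤ :=
  if hxz : x = z then 1
  else if h : x ≤ z then
    - ∑ y ∈ (Finset.Ioc x z).attach, f x y.1 * rinv f y.1 z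
  else 0
termination_by (Finset.Icc x z).card
decreasing_by
  have hy := Finset.mem_Ioc.mp y.2
  refine Finset.card_lt_card ?_
  refine (Finset.ssubset_iff_of_subset (Finset.Icc_subset_Icc_left hy.1.le)).mpr
    ⟨x, Finset.mem_Icc.mpr ⟨le_rfl, h⟩, fun hc => hy.1.not_ge (Finset.mem_Icc.mp hc).1⟩

lemma rinv_self (f : P → P → Polynomial ℤ) (x : P) : rinv f x x = 1 := by
  rw [rinv.eq_def]; simp

lemma rinv_not_le (f : P → P → Polynomial ℤ) {x z : P} (h : ¬ x ≤ z) : rinv f x z = 0 := by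
  rw [rinv.eq_def]
  have : x ≠ z := fun he => h (he ▸ le_rfl)
  simp [this, h]

lemma supported_rinv (f : P → P → Polynomial ℤ) : Supported (rinv f) :=
  fun _ _ h => rinv_not_le f h

lemma rinv_lt (f : P → P → Polynomial ℤ) {x z : P} (h : x < z) :
    rinv f x z = - ∑ y ∈ (Finset.Ioc x z).attach, f x y.1 * rinv f y.1 z := by
  rw [rinv.eq_def]
  simp [h.ne, h.le]

lemma conv_f_rinv (f : P → P → Polynomial ℤ) (hf1 : ∀ x, f x x = 1) :
    conv f (rinv f) = delta := by
  funext x z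
  unfold conv delta
  rcases eq_or_ne x z with rfl | hne
  · rw [Finset.Icc_self, Finset.sum_singleton, hf1, rinv_self, one_mul, if_pos rfl]
  · rw [if_neg hne]
    by_cases hxz : x ≤ z
    · have hlt : x < z := lt_of_le_of_ne hxz hne
      rw [Finset.Icc_eq_cons_Ioc hxz, Finset.sum_cons, hf1, one_mul, rinv_lt f hlt,
        ← Finset.sum_attach (Finset.Ioc x z) (fun y => f x y * rinv f y z)]
      ring
    · rw [Finset.Icc_eq_empty hxz, Finset.sum_empty]

/-- left inverse -/
def linv (f : P → P → Polynomial ℤ) (x z : P) : Polynomial ℤ :=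
  if hxz : x = z then 1
  else if h : x ≤ z then
    - ∑ y ∈ (Finset.Ico x z).attach, linv f x y.1 * f y.1 z
  else 0
termination_by (Finset.Icc x z).card
decreasing_by
  have hy := Finset.mem_Ico.mp y.2
  refine Finset.card_lt_card ?_
  refine (Finset.ssubset_iff_of_subset (Finset.Icc_subset_Icc_right hy.2.le)).mpr
    ⟨z, Finset.mem_Icc.mpr ⟨h, le_rfl⟩, fun hc => hy.2.not_ge (Finset.mem_Icc.mp hc).2⟩

lemma linv_self (f : P → P → Polynomial ℤ) (x : P) : linv f x x = 1 := by
  rw [linv.eq_def]; simp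

lemma linv_not_le (f : P → P → Polynomial ℤ) {x z : P} (h : ¬ x ≤ z) : linv f x z = 0 := by
  rw [linv.eq_def]
  have : x ≠ z := fun he => h (he ▸ le_rfl)
  simp [this, h]

lemma supported_linv (f : P → P → Polynomial ℤ) : Supported (linv f) :=
  fun _ _ h => linv_not_le f h

lemma linv_lt (f : P → P → Polynomial ℤ) {x z : P} (h : x < z) :
    linv f x z = - ∑ y ∈ (Finset.Ico x z).attach, linv f x y.1 * f y.1 z := by
  rw [linv.eq_def]
  simp [h.ne, h.le]

lemma conv_linv_f (f : P → P → Polynomial ℤ) (hf1 : ∀ x, f x x = 1) :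
    conv (linv f) f = delta := by
  funext x z
  unfold conv delta
  rcases eq_or_ne x z with rfl | hne
  · rw [Finset.Icc_self, Finset.sum_singleton, hf1, linv_self, one_mul, if_pos rfl]
  · rw [if_neg hne]
    by_cases hxz : x ≤ z
    · have hlt : x < z := lt_of_le_of_ne hxz hne
      rw [Finset.Icc_eq_cons_Ico hxz, Finset.sum_cons, hf1, mul_one, linv_lt f hlt,
        ← Finset.sum_attach (Finset.Ico x z) (fun y => linv f x y * f y z)]
      ring
    · rw [Finset.Icc_eq_empty hxz, Finset.sum_empty]

lemma linv_eq_rinv (f : P → P → Polynomial ℤ) (hf1 : ∀ x, f x x = 1)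
    (hsupp : Supported f) : linv f = rinv f := by
  have h1 : conv (conv (linv f) f) (rinv f) = rinv f := by
    rw [conv_linv_f f hf1, delta_conv _ (supported_rinv f)]
  rw [conv_assoc, conv_f_rinv f hf1, conv_delta _ (supported_linv f)] at h1
  exact h1

lemma conv_rinv_f (f : P → P → Polynomial ℤ) (hf1 : ∀ x, f x x = 1)
    (hsupp : Supported f) : conv (rinv f) f = delta := by
  rw [← linv_eq_rinv f hf1 hsupp]; exact conv_linv_f f hf1

lemma rinv_InS (r : P → P → ℕ) (hr : IsWeakRank r) (f : P → P → Polynomial ℤ)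
    (hf : InS r f) : InS r (rinv f) := by
  intro x z hxz
  have key : ∀ n : ℕ, ∀ x z : P, (Finset.Icc x z).card ≤ n → x ≤ z →
      (rinv f x z).natDegree ≤ r x z := by
    intro n
    induction n with
    | zero =>
      intro x z hc hxz
      exact absurd (Finset.card_pos.mpr ⟨x, Finset.mem_Icc.mpr ⟨le_rfl, hxz⟩⟩) (by omega)
    | succ n ih =>
      intro x z hc hxz
      rcases eq_or_ne x z with rfl | hne
      · simp [rinv_self]
      · have hlt : x < z := lt_of_le_of_ne hxz hne
        rw [rinv_lt f hlt, Polynomial.natDegree_neg]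
        refine Polynomial.natDegree_sum_le_of_forall_le _ _ fun y _ => ?_
        have hy := Finset.mem_Ioc.mp y.2
        have hcard : (Finset.Icc y.1 z).card < (Finset.Icc x z).card := by
          refine Finset.card_lt_card ?_
          exact (Finset.ssubset_iff_of_subset (Finset.Icc_subset_Icc_left hy.1.le)).mpr
            ⟨x, Finset.mem_Icc.mpr ⟨le_rfl, hxz⟩,
             fun hc => hy.1.not_ge (Finset.mem_Icc.mp hc).1⟩
        have hd : (rinv f y.1 z).natDegree ≤ r y.1 z := ih y.1 z (by omega) hy.2
        calc (f x y.1 * rinv f y.1 z).natDegree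
            ≤ (f x y.1).natDegree + (rinv f y.1 z).natDegree := Polynomial.natDegree_mul_le
          _ ≤ r x y.1 + r y.1 z := add_le_add (hf x y.1 hy.1.le) hd
          _ = r x z := hr.2 x y.1 z hy.1.le hy.2
  exact key (Finset.Icc x z).card x z le_rfl hxz


/-- for `f ∈ 𝒮_{1/2}(P)`, `f⁻¹ f̄` is a `P`-kernel whose left
KLS-function is `f`. -/
theorem stmt_8 {P : Type*} [PartialOrder P] [LocallyFiniteOrder P] [DecidableEq P]
    (r : P → P → ℕ) (hr : IsWeakRank r)
    (f : P → P → Polynomial ℤ) (hf : InHalf r f) (hsupp : Supported f) :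
    ∃ finv : P → P → Polynomial ℤ,
      Supported finv ∧
      (∀ x z : P, x ≤ z → conv f finv x z = delta x z) ∧
      (∀ x z : P, x ≤ z → conv finv f x z = delta x z) ∧
      IsKernel r (conv finv (bar r f)) ∧
      (∀ x z : P, x ≤ z →
        bar r f x z = conv f (conv finv (bar r f)) x z) := by
  have hf1 : ∀ x, f x x = 1 := hf.1
  have hfS : InS r f := by
    intro x y hxy
    rcases eq_or_lt_of_le hxy with rfl | hlt
    · simp [hf1]
    · have := hf.2 x y hlt; omega
  have hgS : InS r (rinv f) := rinv_InS r hr f hfS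
  have hA : conv f (rinv f) = delta := conv_f_rinv f hf1
  have hB : conv (rinv f) f = delta := conv_rinv_f f hf1 hsupp
  have hsg : Supported (rinv f) := supported_rinv f
  have hsbf : Supported (bar r f) := supported_bar r f hsupp
  have hbfS : InS r (bar r f) := InS_bar r f hfS
  have hbarfg : conv (bar r f) (bar r (rinv f)) = delta := by
    rw [← bar_conv r hr f (rinv f) hfS hgS, hA, bar_delta r hr]
  have hbargf : conv (bar r (rinv f)) (bar r f) = delta := by
    rw [← bar_conv r hr (rinv f) f hgS hfS, hB, bar_delta r hr]
  have hbarκ : bar r (conv (rinv f) (bar r f)) = conv (bar r (rinv f)) f := by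
    rw [bar_conv r hr (rinv f) (bar r f) hgS hbfS, bar_bar]
  refine ⟨rinv f, hsg, fun x z _ => congrFun (congrFun hA x) z,
    fun x z _ => congrFun (congrFun hB x) z, ⟨?_, ?_, ?_, ?_⟩, ?_⟩
  · -- InS r κ
    intro x z hxz
    unfold conv
    refine Polynomial.natDegree_sum_le_of_forall_le _ _ fun y hy => ?_
    rw [Finset.mem_Icc] at hy
    calc (rinv f x y * bar r f y z).natDegree
        ≤ (rinv f x y).natDegree + (bar r f y z).natDegree := Polynomial.natDegree_mul_le
      _ ≤ r x y + r y z := add_le_add (hgS x y hy.1) (hbfS y z hy.2)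
      _ = r x z := hr.2 x y z hy.1 hy.2
  · -- κ x x = 1
    intro x
    show ∑ y ∈ Finset.Icc x x, rinv f x y * bar r f y x = 1
    rw [Finset.Icc_self, Finset.sum_singleton, rinv_self]
    show 1 * (f x x).reflect (r x x) = 1
    rw [hf1, rank_self r hr, Polynomial.reflect_one, pow_zero, one_mul]
  · -- κ κ̄ = δ
    intro x z _
    rw [hbarκ, conv_assoc (rinv f) (bar r f) (conv (bar r (rinv f)) f),
      ← conv_assoc (bar r f) (bar r (rinv f)) f, hbarfg, delta_conv f hsupp, hB]
  · -- κ̄ κ = δ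
    intro x z _
    rw [hbarκ, conv_assoc (bar r (rinv f)) f (conv (rinv f) (bar r f)),
      ← conv_assoc f (rinv f) (bar r f), hA, delta_conv _ hsbf, hbargf]
  · -- f̄ = f κ
    intro x z _
    rw [← conv_assoc f (rinv f) (bar r f), hA, delta_conv _ hsbf]


end

end KLS
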